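/- arXiv:1701.00146 — 3 statements merged into one kernel-verified Lean document; each statement's English description precedes it below -/
import Mathlib

section
/- For the reduction that creates, from a directed graph G = (V,E) with unique source s and sink t, a signed edge-matching instance with one vertex tile per vertex, one edge tile per edge, and one bridge tile (n = |V| + |E| + 1 tiles): if G has a Hamiltonian path from s to t, then all n tiles can be placed in a 1 × n row with all adjacent edges compatible. -/
/-- Colors used by the reduction: entering/leaving colors `I v`, `O v` per vertex,
an unmatchable color `U v` per vertex, a global garbage color `X`, and the bridge's
unmatchable color `UB`. -/
inductive Col (V : Type) where
  | I : V → Col V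
  | O : V → Col V
  | U : V → Col V
  | X : Col V
  | UB : Col V

/-- A signed square tile: each side carries a color and a sign (`true` = `+`). -/
structure STile (V : Type) where
  left : Col V × Bool
  top : Col V × Bool
  right : Col V × Bool
  bottom : Col V × Bool

/-- Rotation of a tile by 90 degrees. -/
def rotCW {V : Type} (T : STile V) : STile V :=
  ⟨T.bottom, T.left, T.top, T.right⟩

/-- Vertex tile `T(+I_v, +U_v, +O_v, +U_v)`. -/
def vertexTile {V : Type} (v : V) : STile V :=
  ⟨(.I v, true), (.U v, true), (.O v, true), (.U v, true)⟩

/-- Edge tile `T(-O_u, +X, -I_v, -X)` for an edge `(u, v)`. -/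
def edgeTile {V : Type} (u v : V) : STile V :=
  ⟨(.O u, false), (.X, true), (.I v, false), (.X, false)⟩

/-- Bridge tile `T(-O_t, +U_B, -X, +U_B)`. -/
def bridgeTile {V : Type} (t : V) : STile V :=
  ⟨(.O t, false), (.UB, true), (.X, false), (.UB, true)⟩

/-- Two horizontally adjacent tiles are compatible if the shared edge has the same
color and opposite signs. -/
def compatible {V : Type} (a b : STile V) : Prop :=
  a.right.1 = b.left.1 ∧ a.right.2 = !b.left.2

/-- The tile (in canonical orientation) associated to each tile identifier:
one vertex tile per vertex, one edge tile per edge, and one bridge tile. -/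
def baseTile {V : Type} (E : Finset (V × V)) (t : V) :
    V ⊕ {e : V × V // e ∈ E} ⊕ Unit → STile V
  | .inl v => vertexTile v
  | .inr (.inl e) => edgeTile e.1.1 e.1.2
  | .inr (.inr _) => bridgeTile t

/-! Along the Hamiltonian path `s = v₁, …, vₖ = t` lay down, unrotated, the vertex tile of `vᵢ`
followed by the edge tile of `(vᵢ, vᵢ₊₁)`: the junctions match `+O_{vᵢ}` with `-O_{vᵢ}` and
`-I_{vᵢ₊₁}` with `+I_{vᵢ₊₁}`. The bridge tile then matches `-O_t` against the vertex tile of `t` and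
exposes `-X` on its right. Each edge tile off the path, turned three times, shows `+X` on its left
and `-X` on its right, so these tiles can follow in any order. The row contains every tile exactly
once, and reading it off gives the bijection with the positions. -/

theorem List.Nodup.exists_finEquiv_of_isChain {α : Type*} [Fintype α] {R : α → α → Prop}
    {L : List α} (hnd : L.Nodup) (hall : ∀ a, a ∈ L) (hR : L.IsChain R) {n : ℕ}
    (hn : Fintype.card α = n) :
    ∃ σ : Fin n ≃ α, ∀ i j : Fin n, (j : ℕ) = i + 1 → R (σ i) (σ j) := by
  classical
  have hlen : n = L.length := by
    rw [← hn, Fintype.card_congr (hnd.getEquivOfForallMemList L hall).symm, Fintype.card_fin]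
  subst hlen
  refine ⟨hnd.getEquivOfForallMemList L hall, fun i j hij => ?_⟩
  obtain ⟨j, hj⟩ := j
  subst hij
  exact List.isChain_iff_getElem.mp hR i hj

theorem List.nodup_append_toList_compl {α : Type*} [Fintype α] [DecidableEq α] {P : List α}
    (hP : P.Nodup) : (P ++ (Finset.univ \ P.toFinset).toList).Nodup :=
  hP.append (Finset.nodup_toList _) fun a haP haR => by simp_all

namespace STile

variable {V : Type}

theorem compatible_vertexTile_edgeTile (v w : V) : compatible (vertexTile v) (edgeTile v w) :=
  ⟨rfl, rfl⟩

theorem compatible_edgeTile_vertexTile (v w : V) : compatible (edgeTile v w) (vertexTile w) :=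
  ⟨rfl, rfl⟩

theorem compatible_vertexTile_bridgeTile (t : V) : compatible (vertexTile t) (bridgeTile t) :=
  ⟨rfl, rfl⟩

theorem compatible_bridgeTile_rotCW_three_edgeTile (t u v : V) :
    compatible (bridgeTile t) (rotCW^[3] (edgeTile u v)) :=
  ⟨rfl, rfl⟩

theorem compatible_rotCW_three_edgeTile (u v u' v' : V) :
    compatible (rotCW^[3] (edgeTile u v)) (rotCW^[3] (edgeTile u' v')) :=
  ⟨rfl, rfl⟩

end STile

abbrev TileId {V : Type} (E : Finset (V × V)) : Type := V ⊕ {e : V × V // e ∈ E} ⊕ Unit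

section PathRow

variable {V : Type} (E : Finset (V × V))

def pathRow : (l : List V) → l.IsChain (fun a b => (a, b) ∈ E) → List (TileId E)
  | [], _ => []
  | [v], _ => [.inl v]
  | v :: w :: r, h =>
    .inl v :: .inr (.inl ⟨(v, w), (List.isChain_cons_cons.mp h).1⟩) ::
      pathRow (w :: r) (List.isChain_cons_cons.mp h).2

variable {E}

theorem head?_pathRow_cons (v : V) (r : List V) (h) :
    (pathRow E (v :: r) h).head? = some (.inl v) := by
  cases r <;> rfl

theorem getLast?_pathRow : ∀ (l : List V) (h),
    (pathRow E l h).getLast? = l.getLast?.map .inl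
  | [], _ | [_], _ => rfl
  | v :: w :: r, h => by
    simp [pathRow, List.getLast?_cons, getLast?_pathRow]

theorem mem_pathRow : ∀ {l : List V} {h} {x}, x ∈ pathRow E l h →
    (∃ v ∈ l, x = .inl v) ∨ ∃ e : {e // e ∈ E}, e.1.1 ∈ l ∧ x = .inr (.inl e)
  | [], _, _, hx => by simp [pathRow] at hx
  | [v], _, _, hx => by simp_all [pathRow]
  | v :: w :: r, h, x, hx => by
    simp only [pathRow, List.mem_cons] at hx
    rcases hx with rfl | rfl | hx
    · simp
    · simp
    · rcases mem_pathRow hx with ⟨u, hu, rfl⟩ | ⟨e, he, rfl⟩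
      · exact .inl ⟨u, .tail _ hu, rfl⟩
      · exact .inr ⟨e, .tail _ he, rfl⟩

theorem inl_mem_pathRow : ∀ {l : List V} {h} {v}, v ∈ l → .inl v ∈ pathRow E l h
  | [], _, _, hv => by simp at hv
  | [_], _, _, hv => by simp_all [pathRow]
  | u :: w :: r, h, v, hv => by
    rcases List.mem_cons.mp hv with rfl | hv
    · exact .head _
    · exact .tail _ (.tail _ (inl_mem_pathRow hv))

theorem bridge_not_mem_pathRow {l : List V} {h} : .inr (.inr ()) ∉ pathRow E l h := by
  intro hx
  rcases mem_pathRow hx with ⟨_, _, hx⟩ | ⟨_, _, hx⟩ <;> simp at hx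

theorem nodup_pathRow : ∀ {l : List V} {h}, l.Nodup → (pathRow E l h).Nodup
  | [], _, _ | [_], _, _ => by simp [pathRow]
  | v :: w :: r, h, hl => by
    have hv : v ∉ w :: r := (List.nodup_cons.mp hl).1
    refine List.nodup_cons.mpr ⟨?_, List.nodup_cons.mpr ⟨?_, nodup_pathRow hl.of_cons⟩⟩
    · intro hx
      rcases List.mem_cons.mp hx with hx | hx
      · simp at hx
      · rcases mem_pathRow hx with ⟨u, hu, hx⟩ | ⟨_, _, hx⟩
        · exact hv (Sum.inl.inj hx ▸ hu)
        · simp at hx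
    · intro hx
      rcases mem_pathRow hx with ⟨_, _, hx⟩ | ⟨e, he, hx⟩
      · simp at hx
      · obtain rfl : _ = e := Sum.inl.inj (Sum.inr.inj hx)
        exact hv he

theorem isChain_pathRow (t : V) : ∀ (l : List V) (h),
    (pathRow E l h).IsChain fun a b => compatible (baseTile E t a) (baseTile E t b)
  | [], _ | [_], _ => by simp [pathRow]
  | v :: w :: r, h => by
    refine List.isChain_cons_cons.mpr ⟨STile.compatible_vertexTile_edgeTile v w,
      List.isChain_cons.mpr ⟨fun y hy => ?_, isChain_pathRow t _ _⟩⟩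
    rw [head?_pathRow_cons, Option.mem_some_iff] at hy
    subst hy
    exact STile.compatible_edgeTile_vertexTile v w

end PathRow

section Row

variable {V : Type} [Fintype V] [DecidableEq V] (E : Finset (V × V)) (t : V)
  (l : List V) (h : l.IsChain (fun a b => (a, b) ∈ E))

def offPath : Finset (TileId E) :=
  Finset.univ \ (pathRow E l h ++ [Sum.inr (Sum.inr ())]).toFinset

def placedTile (x : TileId E) : STile V :=
  rotCW^[if x ∈ offPath E l h then 3 else 0] (baseTile E t x)

noncomputable def row : List (TileId E) :=
  pathRow E l h ++ .inr (.inr ()) :: (offPath E l h).toList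

variable {E t l h}

theorem nodup_row (hl : l.Nodup) : (row E l h).Nodup := by
  have hP : (pathRow E l h ++ [Sum.inr (Sum.inr ())]).Nodup :=
    (nodup_pathRow hl).append (List.nodup_singleton _) (by simpa using bridge_not_mem_pathRow)
  simpa [row, offPath] using List.nodup_append_toList_compl hP

theorem mem_row (x : TileId E) : x ∈ row E l h := by
  simp only [row, offPath, List.mem_append, List.mem_cons, Finset.mem_toList, Finset.mem_sdiff,
    Finset.mem_univ, List.mem_toFinset, true_and]
  tauto

theorem placedTile_of_not_mem_offPath {x : TileId E} (hx : x ∉ offPath E l h) :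
    placedTile E t l h x = baseTile E t x := by
  simp [placedTile, hx]

theorem placedTile_of_mem_offPath (hall : ∀ v, v ∈ l) {x : TileId E} (hx : x ∈ offPath E l h) :
    ∃ u v, placedTile E t l h x = rotCW^[3] (edgeTile u v) := by
  simp only [offPath, Finset.mem_sdiff, Finset.mem_univ, List.mem_toFinset, List.mem_append,
    List.mem_singleton, true_and, not_or] at hx
  rcases x with v | e | ⟨⟩
  · exact absurd (inl_mem_pathRow (hall v)) hx.1
  · exact ⟨e.1.1, e.1.2, by simp [placedTile, offPath, hx, baseTile]⟩
  · exact absurd rfl hx.2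

theorem isChain_row (hall : ∀ v, v ∈ l) (hlast : l.getLast? = some t) :
    (row E l h).IsChain fun x y => compatible (placedTile E t l h x) (placedTile E t l h y) := by
  have hpath : (pathRow E l h).IsChain
      fun x y => compatible (placedTile E t l h x) (placedTile E t l h y) := by
    refine (isChain_pathRow t l h).imp_of_mem_imp fun x y hx hy hxy => ?_
    rwa [placedTile_of_not_mem_offPath (by simp [offPath, hx]),
      placedTile_of_not_mem_offPath (by simp [offPath, hy])]
  have hbridge : placedTile E t l h (.inr (.inr ())) = bridgeTile t :=
    placedTile_of_not_mem_offPath (by simp [offPath])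
  have htail : List.IsChain (fun x y => compatible (placedTile E t l h x) (placedTile E t l h y))
      (.inr (.inr ()) :: (offPath E l h).toList) := by
    refine List.Pairwise.isChain (List.pairwise_cons.mpr ⟨fun y hy => ?_,
      List.pairwise_of_forall_mem_list fun x hx y hy => ?_⟩)
    · obtain ⟨u, v, hy⟩ := placedTile_of_mem_offPath hall (Finset.mem_toList.mp hy)
      rw [hbridge, hy]
      exact STile.compatible_bridgeTile_rotCW_three_edgeTile t u v
    · obtain ⟨u, v, hx⟩ := placedTile_of_mem_offPath hall (Finset.mem_toList.mp hx)
      obtain ⟨u', v', hy⟩ := placedTile_of_mem_offPath hall (Finset.mem_toList.mp hy)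
      rw [hx, hy]
      exact STile.compatible_rotCW_three_edgeTile u v u' v'
  refine List.isChain_append.mpr ⟨hpath, htail, fun x hx y hy => ?_⟩
  rw [getLast?_pathRow, hlast, Option.map_some, Option.mem_some_iff] at hx
  rw [List.head?_cons, Option.mem_some_iff] at hy
  subst hx hy
  rw [hbridge, placedTile_of_not_mem_offPath (by simp [offPath, inl_mem_pathRow (hall t)])]
  exact STile.compatible_vertexTile_bridgeTile t

end Row

theorem stmt14_general {V : Type} [Fintype V] (E : Finset (V × V)) (s t : V)
    (hham : ∃ l : List V, l.Nodup ∧ (∀ v : V, v ∈ l) ∧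
      l.Chain' (fun a b => (a, b) ∈ E) ∧ l.head? = some s ∧ l.getLast? = some t) :
    ∃ (σ : Fin (Fintype.card V + E.card + 1) ≃ (V ⊕ {e : V × V // e ∈ E} ⊕ Unit))
      (rot : Fin (Fintype.card V + E.card + 1) → ℕ),
      ∀ i j : Fin (Fintype.card V + E.card + 1), (j : ℕ) = (i : ℕ) + 1 →
        compatible (rotCW^[rot i] (baseTile E t (σ i)))
          (rotCW^[rot j] (baseTile E t (σ j))) := by
  classical
  obtain ⟨l, hnd, hall, hch, -, hlast⟩ := hham
  have hcard : Fintype.card (TileId E) = Fintype.card V + E.card + 1 := by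
    simp [Fintype.card_sum, add_assoc]
  obtain ⟨σ, hσ⟩ := (nodup_row (h := hch) hnd).exists_finEquiv_of_isChain mem_row
    (isChain_row hall hlast) hcard
  exact ⟨σ, fun i => if σ i ∈ offPath E l hch then 3 else 0, hσ⟩

/-- If the directed graph `G = (V, E)`, with source `s` and sink `t` (unique),
has a Hamiltonian path from `s` to `t`, then all `n = |V| + |E| + 1` tiles of the
constructed signed edge-matching instance can be placed (with rotations) in a
`1 × n` row with every adjacent pair compatible. -/
theorem stmt14 {V : Type} [Fintype V] [DecidableEq V] (E : Finset (V × V)) (s t : V)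
    (hs : ∀ u : V, (u, s) ∉ E) (ht : ∀ w : V, (t, w) ∉ E)
    (hsu : ∀ v : V, (∀ u : V, (u, v) ∉ E) → v = s)
    (htu : ∀ v : V, (∀ w : V, (v, w) ∉ E) → v = t)
    (hham : ∃ l : List V, l.Nodup ∧ (∀ v : V, v ∈ l) ∧
      l.Chain' (fun a b => (a, b) ∈ E) ∧ l.head? = some s ∧ l.getLast? = some t) :
    ∃ (σ : Fin (Fintype.card V + E.card + 1) ≃ (V ⊕ {e : V × V // e ∈ E} ⊕ Unit))
      (rot : Fin (Fintype.card V + E.card + 1) → ℕ),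
      ∀ i j : Fin (Fintype.card V + E.card + 1), (j : ℕ) = (i : ℕ) + 1 →
        compatible (rotCW^[rot i] (baseTile E t (σ i)))
          (rotCW^[rot j] (baseTile E t (σ j))) :=
  stmt14_general E s t hham
end

section
/- In the signed edge-matching instance built from a directed graph G with unique source s and unique sink t (one vertex tile per vertex, one edge tile per edge, one bridge tile, as specified), if all tiles can be placed in a 1 × n row with every adjacent pair compatible, then G has a Hamiltonian path from s to t. -/
lemma List.exists_nodup_isChain_of_bijective {α : Type*} {r : α → α → Prop} {m : ℕ}
    {f : Fin (m + 1) → α} (hf : Function.Bijective f)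
    (hr : ∀ k : Fin m, r (f k.castSucc) (f k.succ)) :
    ∃ l : List α, l.Nodup ∧ (∀ a, a ∈ l) ∧ l.IsChain r ∧
      l.head? = some (f 0) ∧ l.getLast? = some (f (Fin.last m)) :=
  ⟨List.ofFn f, List.nodup_ofFn.2 hf.1, fun a => List.mem_ofFn.2 (hf.2 a),
    List.isChain_ofFn.2 fun i hi => hr ⟨i, by omega⟩, by simp [List.ofFn_succ],
    by rw [List.ofFn_succ']; simp⟩

section Rotation

variable {V : Type}

lemma isPeriodicPt_rotCW (T : STile V) : Function.IsPeriodicPt rotCW 4 T := rfl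

lemma left_right_rotCW_iterate (T : STile V) (r : ℕ) :
    ((rotCW^[r] T).left = T.left ∧ (rotCW^[r] T).right = T.right) ∨
    ((rotCW^[r] T).left = T.bottom ∧ (rotCW^[r] T).right = T.top) ∨
    ((rotCW^[r] T).left = T.right ∧ (rotCW^[r] T).right = T.left) ∨
    ((rotCW^[r] T).left = T.top ∧ (rotCW^[r] T).right = T.bottom) := by
  rw [← (isPeriodicPt_rotCW T).iterate_mod_apply]
  have : r % 4 < 4 := Nat.mod_lt r (by norm_num)
  interval_cases r % 4 <;> simp [rotCW]

lemma compatible.rotCW_iterate_two {a b : STile V} (h : compatible a b) :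
    compatible (rotCW^[2] b) (rotCW^[2] a) :=
  ⟨h.1.symm, by simp [rotCW, h.2]⟩

lemma compatible.left_eq {a b : STile V} {c : Col V} {β : Bool} (h : compatible a b)
    (hr : a.right = (c, β)) : b.left = (c, !β) := by
  obtain ⟨h1, h2⟩ := h
  rw [hr] at h1 h2
  ext <;> simp_all

lemma compatible.right_eq {a b : STile V} {c : Col V} {β : Bool} (h : compatible a b)
    (hl : b.left = (c, β)) : a.right = (c, !β) := by
  obtain ⟨h1, h2⟩ := h
  rw [hl] at h1 h2
  ext <;> simp_all

end Rotation

namespace SignedTiling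

variable {V : Type} {E : Finset (V × V)} {t : V}

abbrev TileId (E : Finset (V × V)) := V ⊕ {e : V × V // e ∈ E} ⊕ Unit

variable (E t) in
def IsTurnOf (x : TileId E) (T : STile V) : Prop :=
  ∃ r, T = rotCW^[r] (baseTile E t x)

namespace IsTurnOf

variable {x : TileId E} {T : STile V}

lemma rotCW_iterate_two (h : IsTurnOf E t x T) : IsTurnOf E t x (rotCW^[2] T) := by
  obtain ⟨r, rfl⟩ := h
  exact ⟨2 + r, (Function.iterate_add_apply _ _ _ _).symm⟩

lemma left_right_cases (h : IsTurnOf E t x T) :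
    (∃ v, x = .inl v ∧ ((T.left = (.I v, true) ∧ T.right = (.O v, true)) ∨
      (T.left = (.O v, true) ∧ T.right = (.I v, true)) ∨
      (T.left = (.U v, true) ∧ T.right = (.U v, true)))) ∨
    (∃ e : {e : V × V // e ∈ E}, x = .inr (.inl e) ∧
      ((T.left = (.O e.1.1, false) ∧ T.right = (.I e.1.2, false)) ∨
      (T.left = (.I e.1.2, false) ∧ T.right = (.O e.1.1, false)) ∨
      (T.left = (.X, false) ∧ T.right = (.X, true)) ∨
      (T.left = (.X, true) ∧ T.right = (.X, false)))) ∨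
    (x = .inr (.inr ()) ∧ ((T.left = (.O t, false) ∧ T.right = (.X, false)) ∨
      (T.left = (.X, false) ∧ T.right = (.O t, false)) ∨
      (T.left = (.UB, true) ∧ T.right = (.UB, true)))) := by
  obtain ⟨r, rfl⟩ := h
  rcases left_right_rotCW_iterate (baseTile E t x) r with h | h | h | h <;>
    rcases x with v | e | ⟨⟩ <;> simp_all [baseTile, vertexTile, edgeTile, bridgeTile]

lemma left_ne_U (h : IsTurnOf E t x T) (v : V) : T.left ≠ (.U v, false) := by
  rcases h.left_right_cases with
    ⟨_, _, h | h | h⟩ | ⟨_, _, h | h | h | h⟩ | ⟨_, h | h | h⟩ <;>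
    simp [h.1]

lemma left_ne_I_false {v : V} (hv : ∀ u, (u, v) ∉ E) (h : IsTurnOf E t x T) :
    T.left ≠ (.I v, false) := by
  intro hl
  rcases h.left_right_cases with
    ⟨_, _, h | h | h⟩ | ⟨e, _, h | h | h | h⟩ | ⟨_, h | h | h⟩ <;>
    rw [h.1] at hl <;> simp at hl
  subst hl
  exact hv e.1.1 e.2

lemma of_left_eq_I {v : V} (h : IsTurnOf E t x T) (hl : T.left = (.I v, true)) :
    x = .inl v ∧ T.right = (.O v, true) := by
  rcases h.left_right_cases with
    ⟨_, _, h | h | h⟩ | ⟨_, _, h | h | h | h⟩ | ⟨_, h | h | h⟩ <;>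
    simp_all

lemma of_left_eq_O {v : V} (h : IsTurnOf E t x T) (hl : T.left = (.O v, false)) :
    (∃ e : {e : V × V // e ∈ E}, x = .inr (.inl e) ∧ e.1.1 = v ∧
      T.right = (.I e.1.2, false)) ∨
    (x = .inr (.inr ()) ∧ v = t ∧ T.right = (.X, false)) := by
  rcases h.left_right_cases with
    ⟨_, _, h | h | h⟩ | ⟨_, _, h | h | h | h⟩ | ⟨_, h | h | h⟩ <;>
    simp_all

lemma of_left_eq_X (h : IsTurnOf E t x T) (hl : T.left = (.X, true)) :
    (∃ e : {e : V × V // e ∈ E}, x = .inr (.inl e)) ∧ T.right = (.X, false) := by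
  rcases h.left_right_cases with
    ⟨_, _, h | h | h⟩ | ⟨_, _, h | h | h | h⟩ | ⟨_, h | h | h⟩ <;>
    simp_all

lemma of_inl {v : V} (h : IsTurnOf E t (.inl v) T) :
    (T.left = (.I v, true) ∧ T.right = (.O v, true)) ∨
    (T.left = (.O v, true) ∧ T.right = (.I v, true)) ∨
    (T.left = (.U v, true) ∧ T.right = (.U v, true)) := by
  rcases h.left_right_cases with ⟨w, hw, h⟩ | ⟨_, he, _⟩ | ⟨hb, _⟩
  · obtain rfl := Sum.inl_injective hw
    exact h
  · exact absurd he Sum.inl_ne_inr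
  · exact absurd hb Sum.inl_ne_inr

end IsTurnOf

variable {N : ℕ} {σ : Fin (N + 1) ≃ TileId E} {T : Fin (N + 1) → STile V}

variable (E t) in
structure IsValidRow (σ : Fin (N + 1) ≃ TileId E) (T : Fin (N + 1) → STile V) : Prop where
  isTurnOf : ∀ i, IsTurnOf E t (σ i) (T i)
  compatible_of_val_eq : ∀ i j : Fin (N + 1), (j : ℕ) = i + 1 → compatible (T i) (T j)

namespace IsValidRow

lemma reverse (h : IsValidRow E t σ T) :
    IsValidRow E t (Fin.revPerm.trans σ) (fun i => rotCW^[2] (T i.rev)) where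
  isTurnOf i := (h.isTurnOf i.rev).rotCW_iterate_two
  compatible_of_val_eq i j hij :=
    (h.compatible_of_val_eq j.rev i.rev (by simp only [Fin.val_rev]; omega)).rotCW_iterate_two

lemma eq_zero_of_left_eq (h : IsValidRow E t σ T) {q : Fin (N + 1)} {c : Col V}
    (hq : (T q).left = (c, true))
    (hc : ∀ x T', IsTurnOf E t x T' → T'.left ≠ (c, false)) : q = 0 := by
  rcases q.eq_zero_or_eq_succ with rfl | ⟨j, rfl⟩
  · rfl
  · exact absurd ((h.compatible_of_val_eq j.castSucc j.succ (by simp)).right_eq hq)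
      (hc _ _ (h.isTurnOf j.castSucc).rotCW_iterate_two)

lemma eq_last_of_right_eq (h : IsValidRow E t σ T) {q : Fin (N + 1)} {c : Col V}
    (hq : (T q).right = (c, true))
    (hc : ∀ x T', IsTurnOf E t x T' → T'.left ≠ (c, false)) : q = Fin.last N := by
  rcases q.eq_castSucc_or_eq_last with ⟨j, rfl⟩ | rfl
  · exact absurd ((h.compatible_of_val_eq j.castSucc j.succ (by simp)).left_eq hq)
      (hc _ _ (h.isTurnOf j.succ))
  · rfl

lemma exists_left_zero_eq_I (h : IsValidRow E t σ T) (hN : N ≠ 0) {s : V}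
    (hs : ∀ u, (u, s) ∉ E) :
    ∃ (σ' : Fin (N + 1) ≃ TileId E) (T' : Fin (N + 1) → STile V),
      IsValidRow E t σ' T' ∧ (T' 0).left = (.I s, true) := by
  have hI (x : TileId E) (T' : STile V) (hT : IsTurnOf E t x T') := hT.left_ne_I_false hs
  have hU (x : TileId E) (T' : STile V) (hT : IsTurnOf E t x T') := hT.left_ne_U s
  have hq : IsTurnOf E t (.inl s) (T (σ.symm (.inl s))) := by
    simpa using h.isTurnOf (σ.symm (.inl s))
  rcases hq.of_inl with ⟨hl, -⟩ | ⟨-, hr⟩ | ⟨hl, hr⟩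
  · refine ⟨σ, T, h, ?_⟩
    rwa [← h.eq_zero_of_left_eq hl hI]
  · refine ⟨_, _, h.reverse, ?_⟩
    change (T (Fin.rev 0)).right = _
    rwa [Fin.rev_zero, ← h.eq_last_of_right_eq hr hI]
  · exact absurd ((h.eq_last_of_right_eq hr hU).symm.trans (h.eq_zero_of_left_eq hl hU))
      (Fin.val_ne_zero_iff.mp hN)

variable {i j : Fin (N + 1)}

lemma succ_of_right_eq_I (h : IsValidRow E t σ T) (hij : (j : ℕ) = i + 1) {v : V}
    (hr : (T i).right = (.I v, false)) : σ j = .inl v ∧ (T j).right = (.O v, true) :=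
  (h.isTurnOf j).of_left_eq_I ((h.compatible_of_val_eq i j hij).left_eq hr)

lemma succ_of_right_eq_O (h : IsValidRow E t σ T) (hij : (j : ℕ) = i + 1) {v : V}
    (hr : (T i).right = (.O v, true)) :
    (∃ e : {e : V × V // e ∈ E}, σ j = .inr (.inl e) ∧ e.1.1 = v ∧
      (T j).right = (.I e.1.2, false)) ∨
    (σ j = .inr (.inr ()) ∧ v = t ∧ (T j).right = (.X, false)) :=
  (h.isTurnOf j).of_left_eq_O ((h.compatible_of_val_eq i j hij).left_eq hr)

lemma succ_of_right_eq_X (h : IsValidRow E t σ T) (hij : (j : ℕ) = i + 1)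
    (hr : (T i).right = (.X, false)) :
    (∃ e : {e : V × V // e ∈ E}, σ j = .inr (.inl e)) ∧ (T j).right = (.X, false) :=
  (h.isTurnOf j).of_left_eq_X ((h.compatible_of_val_eq i j hij).left_eq hr)

end IsValidRow

variable (σ T) in
/-- How tile `i` is crossed when the row is read from a source tile placed first. -/
def ForwardAt (i : Fin (N + 1)) : Prop :=
  (Even (i : ℕ) ∧ ∃ v, σ i = .inl v ∧ (T i).right = (.O v, true)) ∨
  (Odd (i : ℕ) ∧ ∃ e : {e : V × V // e ∈ E}, σ i = .inr (.inl e) ∧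
    (T i).right = (.I e.1.2, false)) ∨
  ((σ i).isRight ∧ (T i).right = (.X, false))

variable (σ) in
abbrev bridgePos : Fin (N + 1) := σ.symm (.inr (.inr ()))

namespace IsValidRow

lemma forwardAt_of_val_eq (h : IsValidRow E t σ T) {i j : Fin (N + 1)}
    (hij : (j : ℕ) = i + 1) (hi : ForwardAt σ T i) : ForwardAt σ T j := by
  rcases hi with ⟨hev, v, -, hr⟩ | ⟨hodd, e, -, hr⟩ | ⟨-, hr⟩
  · rcases h.succ_of_right_eq_O hij hr with ⟨e, he, -, hr'⟩ | ⟨hb, -, hr'⟩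
    · exact Or.inr (Or.inl ⟨hij ▸ hev.add_one, e, he, hr'⟩)
    · exact Or.inr (Or.inr ⟨by simp [hb], hr'⟩)
  · obtain ⟨hv, hr'⟩ := h.succ_of_right_eq_I hij hr
    exact Or.inl ⟨hij ▸ hodd.add_one, _, hv, hr'⟩
  · obtain ⟨⟨e, he⟩, hr'⟩ := h.succ_of_right_eq_X hij hr
    exact Or.inr (Or.inr ⟨by simp [he], hr'⟩)

variable {s : V}

lemma forwardAt (h : IsValidRow E t σ T) (h0 : (T 0).left = (.I s, true))
    (i : Fin (N + 1)) : ForwardAt σ T i := by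
  induction i using Fin.induction with
  | zero =>
    obtain ⟨hs, hr⟩ := (h.isTurnOf 0).of_left_eq_I h0
    exact Or.inl ⟨even_two_mul 0, s, hs, hr⟩
  | succ i ih => exact h.forwardAt_of_val_eq (by simp) ih

lemma exists_edge_of_lt (h : IsValidRow E t σ T) {i j : Fin (N + 1)}
    (hi : (T i).right = (.X, false)) (hij : i < j) :
    ∃ e : {e : V × V // e ∈ E}, σ j = .inr (.inl e) := by
  suffices ∀ j, i < j →
      (∃ e : {e : V × V // e ∈ E}, σ j = .inr (.inl e)) ∧ (T j).right = (.X, false) from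
    (this j hij).1
  intro j
  induction j using Fin.induction with
  | zero => exact fun hi0 => absurd hi0 (Fin.not_lt_zero i)
  | succ j ih =>
    intro hij
    refine h.succ_of_right_eq_X (i := j.castSucc) (by simp) ?_
    rcases (Fin.le_castSucc_iff.mpr hij).eq_or_lt with rfl | hlt
    · exact hi
    · exact (ih hlt).2

lemma bridgePos_eq (h : IsValidRow E t σ T) (h0 : (T 0).left = (.I s, true)) :
    ∃ m, (bridgePos σ : ℕ) = 2 * m + 1 ∧
      ∀ i : Fin (N + 1), (i : ℕ) = 2 * m → σ i = .inl t := by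
  have hp : σ (bridgePos σ) = .inr (.inr ()) := σ.apply_symm_apply _
  rcases (bridgePos σ).eq_zero_or_eq_succ with hp0 | ⟨j, hj⟩
  · have := ((h.isTurnOf 0).of_left_eq_I h0).1
    rw [← hp0, hp] at this
    exact absurd this.symm Sum.inl_ne_inr
  have hjp : ((bridgePos σ : Fin (N + 1)) : ℕ) = (j.castSucc : ℕ) + 1 := by simp [hj]
  rcases h.forwardAt h0 j.castSucc with
    ⟨⟨m, hm⟩, v, hv, hr⟩ | ⟨_, _, _, hr⟩ | ⟨_, hr⟩
  · rcases h.succ_of_right_eq_O hjp hr with ⟨_, he, -⟩ | ⟨-, rfl, -⟩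
    · simp [hp] at he
    · refine ⟨m, by omega, fun i hi => ?_⟩
      rwa [show i = j.castSucc from Fin.ext (by omega)]
  · simpa [hp] using (h.succ_of_right_eq_I hjp hr).1
  · simpa [hp] using (h.succ_of_right_eq_X hjp hr).1

lemma right_bridgePos (h : IsValidRow E t σ T) (h0 : (T 0).left = (.I s, true)) :
    (T (bridgePos σ)).right = (.X, false) := by
  have hp : σ (bridgePos σ) = .inr (.inr ()) := σ.apply_symm_apply _
  rcases h.forwardAt h0 (bridgePos σ) with ⟨-, _, hv, -⟩ | ⟨-, _, he, -⟩ | ⟨-, hr⟩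
  · simp [hp] at hv
  · simp [hp] at he
  · exact hr

lemma even_and_lt_bridgePos (h : IsValidRow E t σ T) (h0 : (T 0).left = (.I s, true))
    {i : Fin (N + 1)} {v : V} (hi : σ i = .inl v) : Even (i : ℕ) ∧ i < bridgePos σ := by
  refine ⟨?_, lt_of_not_ge fun hpi => ?_⟩
  · rcases h.forwardAt h0 i with ⟨hev, -⟩ | ⟨-, _, he, -⟩ | ⟨hx, -⟩
    · exact hev
    · simp [hi] at he
    · simp [hi] at hx
  · obtain ⟨e, he⟩ := h.exists_edge_of_lt (h.right_bridgePos h0)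
      (hpi.lt_of_ne (fun hpi' => by simp [← hpi'] at hi))
    simp [hi] at he

lemma exists_inl_of_even_of_lt (h : IsValidRow E t σ T) (h0 : (T 0).left = (.I s, true))
    {i : Fin (N + 1)} (hev : Even (i : ℕ)) (hi : i < bridgePos σ) :
    ∃ v, σ i = .inl v ∧ (T i).right = (.O v, true) := by
  rcases h.forwardAt h0 i with ⟨-, hv⟩ | ⟨hodd, -⟩ | ⟨-, hr⟩
  · exact hv
  · exact absurd hodd (Nat.not_odd_iff_even.mpr hev)
  · obtain ⟨e, he⟩ := h.exists_edge_of_lt hr hi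
    simp [σ.apply_symm_apply] at he

theorem exists_hamiltonian_path (h : IsValidRow E t σ T)
    (h0 : (T 0).left = (.I s, true)) :
    ∃ l : List V, l.Nodup ∧ (∀ v, v ∈ l) ∧ l.IsChain (fun a b => (a, b) ∈ E) ∧
      l.head? = some s ∧ l.getLast? = some t := by
  obtain ⟨m, hp, ht⟩ := h.bridgePos_eq h0
  have hpN := (bridgePos σ).isLt
  have hvert (k : Fin (m + 1)) : ∃ v, ∀ i : Fin (N + 1), (i : ℕ) = 2 * k →
      σ i = .inl v ∧ (T i).right = (.O v, true) := by
    obtain ⟨v, hv⟩ := h.exists_inl_of_even_of_lt h0 (i := ⟨2 * k, by omega⟩)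
      (even_two_mul _) (Fin.lt_def.2 (by simp only; omega))
    refine ⟨v, fun i hi => ?_⟩
    rwa [show i = ⟨2 * k, by omega⟩ from Fin.ext hi]
  choose f hf using hvert
  have hpos (k : Fin (m + 1)) (i : Fin (N + 1)) (hi : σ i = .inl (f k)) : (i : ℕ) = 2 * k :=
    congrArg Fin.val (σ.injective (hi.trans (hf k ⟨2 * k, by omega⟩ rfl).1.symm))
  have hf0 : f 0 = s :=
    Sum.inl_injective ((hf 0 0 rfl).1.symm.trans ((h.isTurnOf 0).of_left_eq_I h0).1)
  have hfm : f (Fin.last m) = t :=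
    Sum.inl_injective ((hf _ ⟨2 * m, by omega⟩ rfl).1.symm.trans (ht _ rfl))
  rw [← hf0, ← hfm]
  refine List.exists_nodup_isChain_of_bijective ⟨fun k k' hkk' => ?_, fun v => ?_⟩ fun k => ?_
  · have := hpos k' ⟨2 * k, by omega⟩ (hkk' ▸ (hf k _ rfl).1)
    exact Fin.ext (by simp only at this; omega)
  · have hv : σ (σ.symm (.inl v)) = .inl v := σ.apply_symm_apply _
    obtain ⟨⟨c, hc⟩, hlt⟩ := h.even_and_lt_bridgePos h0 hv
    have hlt' := Fin.lt_def.1 hlt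
    exact ⟨⟨c, by omega⟩,
      Sum.inl_injective ((hf _ _ (by simp only; omega)).1.symm.trans hv)⟩
  · obtain ⟨-, hkr⟩ := hf k.castSucc ⟨2 * k, by omega⟩ (by simp)
    rcases h.succ_of_right_eq_O (j := ⟨2 * k + 1, by omega⟩) rfl hkr with
      ⟨e, -, hfst, her⟩ | ⟨hb, -⟩
    · have hnext := (h.succ_of_right_eq_I (j := ⟨2 * k + 2, by omega⟩) rfl her).1
      have hsnd : e.1.2 = f k.succ := Sum.inl_injective
        (hnext.symm.trans (hf k.succ _ (by simp only [Fin.val_succ]; ring)).1)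
      rw [← hfst, ← hsnd]
      exact e.2
    · have := congrArg Fin.val (σ.injective (hb.trans (σ.apply_symm_apply _).symm))
      change 2 * (k : ℕ) + 1 = bridgePos σ at this
      omega

end IsValidRow

end SignedTiling

theorem stmt15_general {V : Type} [Fintype V] (E : Finset (V × V)) (s t : V)
    (hs : ∀ u : V, (u, s) ∉ E)
    (hplace : ∃ (σ : Fin (Fintype.card V + E.card + 1) ≃ (V ⊕ {e : V × V // e ∈ E} ⊕ Unit))
      (rot : Fin (Fintype.card V + E.card + 1) → ℕ),
      ∀ i j : Fin (Fintype.card V + E.card + 1), (j : ℕ) = (i : ℕ) + 1 →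
        compatible (rotCW^[rot i] (baseTile E t (σ i)))
          (rotCW^[rot j] (baseTile E t (σ j)))) :
    ∃ l : List V, l.Nodup ∧ (∀ v : V, v ∈ l) ∧
      l.Chain' (fun a b => (a, b) ∈ E) ∧ l.head? = some s ∧ l.getLast? = some t := by
  obtain ⟨σ, rot, hcomp⟩ := hplace
  have hrow : SignedTiling.IsValidRow E t σ (fun i => rotCW^[rot i] (baseTile E t (σ i))) :=
    ⟨fun i => ⟨rot i, rfl⟩, hcomp⟩
  have hN : Fintype.card V + E.card ≠ 0 := by
    have := Fintype.card_pos_iff.2 ⟨s⟩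
    omega
  obtain ⟨σ', T', hrow', h0⟩ := hrow.exists_left_zero_eq_I hN hs
  exact hrow'.exists_hamiltonian_path h0

/-- Conversely: if all `n = |V| + |E| + 1` tiles of the signed edge-matching
instance constructed from a directed graph `G = (V, E)` with unique source `s` and
unique sink `t` can be placed (with rotations) in a `1 × n` row with every adjacent
pair compatible, then `G` has a Hamiltonian path from `s` to `t`. -/
theorem stmt15 {V : Type} [Fintype V] [DecidableEq V] (E : Finset (V × V)) (s t : V)
    (hs : ∀ u : V, (u, s) ∉ E) (ht : ∀ w : V, (t, w) ∉ E)
    (hsu : ∀ v : V, (∀ u : V, (u, v) ∉ E) → v = s)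
    (htu : ∀ v : V, (∀ w : V, (v, w) ∉ E) → v = t)
    (hplace : ∃ (σ : Fin (Fintype.card V + E.card + 1) ≃ (V ⊕ {e : V × V // e ∈ E} ⊕ Unit))
      (rot : Fin (Fintype.card V + E.card + 1) → ℕ),
      ∀ i j : Fin (Fintype.card V + E.card + 1), (j : ℕ) = (i : ℕ) + 1 →
        compatible (rotCW^[rot i] (baseTile E t (σ i)))
          (rotCW^[rot j] (baseTile E t (σ j)))) :
    ∃ l : List V, l.Nodup ∧ (∀ v : V, v ∈ l) ∧
      l.Chain' (fun a b => (a, b) ∈ E) ∧ l.head? = some s ∧ l.getLast? = some t :=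
  stmt15_general E s t hs hplace
end

section
/- Let a 1 × n board placement have fewer than c empty slots and suppose each boundary between two consecutive placed edge-tiles that is labeled with a vertex color forces a distinguished vertex tile to be either absent from the board or adjacent to a blank/border, where each vertex tile can be forced by at most 4 such boundaries, and at most 3c + 2 vertex tiles can be so forced. Then fewer than 4(3c + 2) placed edge tiles share a vertex-colored boundary with another edge tile. -/
/-- Counting core of Lemma 7: on a board with `b < c` blank slots, each bad boundary
`x` (between two consecutive edge tiles sharing a vertex-colored edge) forces a
vertex tile `f x` belonging to a set `VT` of forced vertex tiles of size at most
`3b + 2 ≤ 3c + 2`, and each vertex tile is forced by at most `4` bad boundaries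
(since in- and out-degrees are at most 2).  Hence fewer than `4(3c + 2)` placed edge
tiles share a vertex-colored boundary with another edge tile. -/
theorem stmt18 {β γ : Type} [DecidableEq γ] (c b : ℕ) (hb : b < c)
    (Bad : Finset β) (VT : Finset γ) (f : β → γ)
    (hf : ∀ x ∈ Bad, f x ∈ VT) (hVT : VT.card ≤ 3 * b + 2)
    (hfib : ∀ t : γ, (Bad.filter (fun x => f x = t)).card ≤ 4) :
    Bad.card < 4 * (3 * c + 2) :=
  calc Bad.card ≤ 4 * VT.card :=
        Finset.card_le_mul_card_image_of_maps_to hf 4 fun t _ => hfib t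
    _ ≤ 4 * (3 * b + 2) := Nat.mul_le_mul_left 4 hVT
    _ < 4 * (3 * c + 2) := by omega
end
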